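/- arXiv:2509.07030 — 3 statements merged into one kernel-verified Lean document; each statement's English description precedes it below -/
import Mathlib

section
/- Let μ̂_j, μ̂_i ∈ ℝ with μ̂_i ≥ μ̂_j and let N_i ≥ 1, N_j ≥ N_i be positive weights. For any θ̄ minimizing L(θ) = ∑_k N_k(μ̂_k − θ_k)² over Θ_j = {θ : θ_j ≥ θ_k ∀k}, the minimum of L over Θ_i is at most the minimum over Θ_j; i.e., swapping to the empirically better arm with fewer pulls does not increase the constrained least-squares objective: min_{θ ∈ Θ_i} L(θ) ≤ min_{θ ∈ Θ_j} L(θ). -/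
/-- With `μ̂ i ≥ μ̂ j`, `N i ≥ 1`, `N j ≥ N i`, the constrained
least-squares value over the cone where arm `i` is maximal is at most that over
the cone where arm `j` is maximal. -/
theorem stmt13 {K : ℕ} (i j : Fin K) (hij : i ≠ j) (N μ : Fin K → ℝ)
    (hN : ∀ k, 0 ≤ N k) (hNi : 1 ≤ N i) (hNij : N i ≤ N j) (hμ : μ j ≤ μ i) :
    sInf {r : ℝ | ∃ θ : Fin K → ℝ, (∀ k, θ k ≤ θ i) ∧
        r = ∑ k, N k * (μ k - θ k) ^ 2}
      ≤ sInf {r : ℝ | ∃ θ : Fin K → ℝ, (∀ k, θ k ≤ θ j) ∧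
        r = ∑ k, N k * (μ k - θ k) ^ 2} := by
  have hbdd : BddBelow {r : ℝ | ∃ θ : Fin K → ℝ, (∀ k, θ k ≤ θ i) ∧
      r = ∑ k, N k * (μ k - θ k) ^ 2} := by
    refine ⟨0, ?_⟩
    rintro r ⟨θ, hθ, rfl⟩
    exact Finset.sum_nonneg fun k _ => mul_nonneg (hN k) (sq_nonneg _)
  refine le_csInf ⟨∑ k, N k * (μ k - (0 : ℝ)) ^ 2,
    ⟨fun _ => 0, fun k => le_refl 0, rfl⟩⟩ ?_
  rintro r ⟨θ, hθ, rfl⟩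
  by_cases hb : θ j ≤ μ i
  · -- Case A: raise coordinate i to θ j
    refine le_trans (csInf_le hbdd ⟨Function.update θ i (θ j), ?_, rfl⟩) ?_
    · intro k
      rcases eq_or_ne k i with rfl | hk
      · simp
      · simpa [Function.update_of_ne hk] using hθ k
    · apply Finset.sum_le_sum
      intro k _
      rcases eq_or_ne k i with rfl | hk
      · simp only [Function.update_self]
        have h1 := hθ k
        nlinarith [mul_nonneg (hN k) (mul_nonneg (sub_nonneg.2 h1)
          (by linarith : (0:ℝ) ≤ 2 * μ k - θ k - θ j))]
      · simp [Function.update_of_ne hk]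
  · -- Case B: θ j > μ i; swap-like move
    push_neg at hb
    set θ' : Fin K → ℝ := Function.update (Function.update θ i (θ j)) j (μ j) with hθ'
    have hθ'i : θ' i = θ j := by
      simp [hθ', Function.update_of_ne hij]
    have hθ'j : θ' j = μ j := by simp [hθ']
    have hθ'k : ∀ k, k ≠ i → k ≠ j → θ' k = θ k := by
      intro k hki hkj
      simp [hθ', Function.update_of_ne hki, Function.update_of_ne hkj]
    have hfeas : ∀ k, θ' k ≤ θ' i := by
      intro k
      rcases eq_or_ne k i with rfl | hki
      · exact le_refl _
      rcases eq_or_ne k j with rfl | hkj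
      · rw [hθ'j, hθ'i]; linarith
      · rw [hθ'k k hki hkj, hθ'i]; exact hθ k
    refine le_trans (csInf_le hbdd ⟨θ', hfeas, rfl⟩) ?_
    have key : ∑ k, (N k * (μ k - θ' k) ^ 2 - N k * (μ k - θ k) ^ 2)
        = (N i * (μ i - θ' i) ^ 2 - N i * (μ i - θ i) ^ 2)
          + (N j * (μ j - θ' j) ^ 2 - N j * (μ j - θ j) ^ 2) := by
      rw [← Finset.sum_subset (Finset.subset_univ ({i, j} : Finset (Fin K)))
        (by
          intro k _ hk
          simp only [Finset.mem_insert, Finset.mem_singleton, not_or] at hk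
          rw [hθ'k k hk.1 hk.2, sub_self]),
        Finset.sum_pair hij]
    rw [Finset.sum_sub_distrib] at key
    have hsq : (μ i - θ j) ^ 2 ≤ (μ j - θ j) ^ 2 := by nlinarith
    have h1 : N i * (μ i - θ j) ^ 2 ≤ N j * (μ j - θ j) ^ 2 :=
      mul_le_mul hNij hsq (sq_nonneg _) (hN j)
    have h2 : 0 ≤ N i * (μ i - θ i) ^ 2 := mul_nonneg (hN i) (sq_nonneg _)
    rw [hθ'i, hθ'j] at key
    simp only [sub_self] at key
    nlinarith [key]
end

section
/- Let μ̂_i ≥ μ̂_j and 0 < N_j < N_i. Then min_{θ ∈ Θ_i} L(θ) − min_{θ ∈ Θ_j} L(θ) ≥ −(μ̂_i − μ̂_j)² / (1/N_j − 1/N_i), where L(θ) = ∑_k N_k(μ̂_k − θ_k)² and Θ_m = {θ : θ_m ≥ θ_k ∀k}. -/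
/-- With `μ̂ i ≥ μ̂ j` and `0 < N j < N i`,
`min_{Θ_i} L - min_{Θ_j} L ≥ -(μ̂ i - μ̂ j)² / (1/N j - 1/N i)`. -/
theorem stmt14 {K : ℕ} (i j : Fin K) (hij : i ≠ j) (N μ : Fin K → ℝ)
    (hN : ∀ k, 0 ≤ N k) (hNj : 0 < N j) (hNij : N j < N i) (hμ : μ j ≤ μ i) :
    -(μ i - μ j) ^ 2 / (1 / N j - 1 / N i)
      ≤ sInf {r : ℝ | ∃ θ : Fin K → ℝ, (∀ k, θ k ≤ θ i) ∧
            r = ∑ k, N k * (μ k - θ k) ^ 2}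
        - sInf {r : ℝ | ∃ θ : Fin K → ℝ, (∀ k, θ k ≤ θ j) ∧
            r = ∑ k, N k * (μ k - θ k) ^ 2} := by
  have hNi : 0 < N i := hNj.trans hNij
  have hd : 0 < 1 / N j - 1 / N i := by
    have h1 : 1 / N i < 1 / N j := one_div_lt_one_div_of_lt hNj hNij
    linarith
  set c : ℝ := (μ i - μ j) ^ 2 / (1 / N j - 1 / N i) with hc
  have hc' : c = (μ i - μ j) ^ 2 * (N i * N j) / (N i - N j) := by
    rw [hc]
    rw [div_eq_div_iff hd.ne' (sub_pos.2 hNij).ne']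
    field_simp
  set Sj : Set ℝ := {r : ℝ | ∃ θ : Fin K → ℝ, (∀ k, θ k ≤ θ j) ∧
      r = ∑ k, N k * (μ k - θ k) ^ 2} with hSj
  have hbddj : BddBelow Sj := by
    refine ⟨0, fun r hr => ?_⟩
    obtain ⟨θ, _, rfl⟩ := hr
    exact Finset.sum_nonneg fun k _ => mul_nonneg (hN k) (sq_nonneg _)
  have hnei : Set.Nonempty {r : ℝ | ∃ θ : Fin K → ℝ, (∀ k, θ k ≤ θ i) ∧
      r = ∑ k, N k * (μ k - θ k) ^ 2} :=
    ⟨∑ k, N k * (μ k - 0) ^ 2, fun _ => 0, fun k => le_refl 0, rfl⟩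
  have key : sInf Sj - c ≤ sInf {r : ℝ | ∃ θ : Fin K → ℝ, (∀ k, θ k ≤ θ i) ∧
      r = ∑ k, N k * (μ k - θ k) ^ 2} := by
    refine le_csInf hnei ?_
    rintro r ⟨θ, hθ, rfl⟩
    -- construct θ' feasible for j
    set θ' : Fin K → ℝ := fun k =>
      if k = i then min (θ i) (μ i) else if k = j then max (θ i) (μ j) else θ k with hθ'
    have hθ'i : θ' i = min (θ i) (μ i) := by simp [hθ']
    have hθ'j : θ' j = max (θ i) (μ j) := by simp [hθ', hij.symm]
    have hfeas : ∀ k, θ' k ≤ θ' j := by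
      intro k
      rw [hθ'j]
      by_cases hk : k = i
      · rw [hk, hθ'i]
        exact le_trans (min_le_left _ _) (le_max_left _ _)
      · by_cases hk' : k = j
        · rw [hk', hθ'j]
        · simp only [hθ', hk, hk', if_false]
          exact le_trans (hθ k) (le_max_left _ _)
    have hmem : (∑ k, N k * (μ k - θ' k) ^ 2) ∈ Sj := ⟨θ', hfeas, rfl⟩
    have h1 : sInf Sj ≤ ∑ k, N k * (μ k - θ' k) ^ 2 := csInf_le hbddj hmem
    -- compare the two sums
    have hsplit : ∀ (ψ : Fin K → ℝ), ∑ k, N k * (μ k - ψ k) ^ 2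
        = (∑ k ∈ ({i, j} : Finset (Fin K))ᶜ, N k * (μ k - ψ k) ^ 2)
          + (N i * (μ i - ψ i) ^ 2 + N j * (μ j - ψ j) ^ 2) := by
      intro ψ
      rw [← Finset.sum_compl_add_sum ({i, j} : Finset (Fin K))
        (fun k => N k * (μ k - ψ k) ^ 2), Finset.sum_pair hij]
    have hcompl : ∑ k ∈ ({i, j} : Finset (Fin K))ᶜ, N k * (μ k - θ' k) ^ 2
        = ∑ k ∈ ({i, j} : Finset (Fin K))ᶜ, N k * (μ k - θ k) ^ 2 := by
      refine Finset.sum_congr rfl fun k hk => ?_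
      simp only [Finset.mem_compl, Finset.mem_insert, Finset.mem_singleton, not_or] at hk
      simp [hθ', hk.1, hk.2]
    have hpair : N i * (μ i - θ' i) ^ 2 + N j * (μ j - θ' j) ^ 2
        ≤ N i * (μ i - θ i) ^ 2 + N j * (μ j - θ j) ^ 2 + c := by
      have hθj2 : 0 ≤ N j * (μ j - θ j) ^ 2 := mul_nonneg hNj.le (sq_nonneg _)
      have hNd : (0:ℝ) < N i - N j := by linarith
      have hmain : (N i * (μ i - θ i ⊓ μ i) ^ 2 + N j * (μ j - θ i ⊔ μ j) ^ 2
          - N i * (μ i - θ i) ^ 2 - N j * (μ j - θ j) ^ 2) * (N i - N j)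
          ≤ (μ i - μ j) ^ 2 * (N i * N j) := by
        rcases le_total (θ i) (μ j) with hs | hs
        · rw [min_eq_left (hs.trans hμ), max_eq_right hs]
          nlinarith [sq_nonneg (μ i - μ j), mul_pos hNi hNj,
            mul_nonneg hθj2 hNd.le]
        · rw [max_eq_left hs]
          rcases le_total (θ i) (μ i) with hs' | hs'
          · rw [min_eq_left hs']
            nlinarith [mul_pos hNi hNj, mul_nonneg hθj2 hNd.le,
              mul_nonneg (mul_nonneg hNj.le hNj.le) (sq_nonneg (μ i - μ j)),
              mul_nonneg (mul_nonneg hNj.le (sub_nonneg.2 hs'))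
                (by linarith : (0:ℝ) ≤ (μ i - μ j) + (θ i - μ j)),
              mul_nonneg (mul_nonneg (mul_nonneg hNj.le (sub_nonneg.2 hs'))
                (by linarith : (0:ℝ) ≤ (μ i - μ j) + (θ i - μ j))) hNd.le]
          · rw [min_eq_right hs']
            nlinarith [sq_nonneg ((N i - N j) * (θ i - μ i) - N j * (μ i - μ j)),
              mul_nonneg hθj2 hNd.le]
      rw [hθ'i, hθ'j, hc']
      have h4 := (le_div_iff₀ hNd).2 hmain
      linarith
    have h2 : ∑ k, N k * (μ k - θ' k) ^ 2 ≤ (∑ k, N k * (μ k - θ k) ^ 2) + c := by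
      rw [hsplit θ', hsplit θ, hcompl]
      linarith
    linarith
  rw [neg_div]
  linarith
end

section
/- Any minimizer θ̄ of L(θ) = ∑_k N_k(μ̂_k − θ_k)² over Θ_i = {θ : θ_i ≥ θ_k ∀k}, with N_i, N_j > 0, satisfies θ̄_i ≥ μ̂_i and θ̄_j = μ̂_j whenever μ̂_i ≥ μ̂_j. -/
/-- Claim B.3: any minimizer `θ̄` of
`L(θ) = ∑ k, N k (μ̂ k - θ k)²` over `Θ_i = {θ : θ i ≥ θ k ∀k}`, with
`N i, N j > 0` and `μ̂ i ≥ μ̂ j`, satisfies `θ̄ i ≥ μ̂ i` and `θ̄ j = μ̂ j`. -/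
theorem stmt15 {K : ℕ} (i j : Fin K) (hij : i ≠ j) (N μ : Fin K → ℝ)
    (hN : ∀ k, 0 ≤ N k) (hNi : 0 < N i) (hNj : 0 < N j) (hμ : μ j ≤ μ i)
    (θbar : Fin K → ℝ) (hfeas : ∀ k, θbar k ≤ θbar i)
    (hmin : ∀ θ : Fin K → ℝ, (∀ k, θ k ≤ θ i) →
      ∑ k, N k * (μ k - θbar k) ^ 2 ≤ ∑ k, N k * (μ k - θ k) ^ 2) :
    μ i ≤ θbar i ∧ θbar j = μ j := by
  set a := θbar i with ha
  set m := max a (μ i) with hm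
  set θ : Fin K → ℝ := Function.update (Function.update θbar i m) j (μ j) with hθ
  have hθi : θ i = m := by
    simp [hθ, Function.update_of_ne hij, Function.update_self]
  have hθj : θ j = μ j := by simp [hθ]
  have hθk : ∀ k, k ≠ i → k ≠ j → θ k = θbar k := by
    intro k hk1 hk2
    simp [hθ, Function.update_of_ne hk2, Function.update_of_ne hk1]
  have hfeas' : ∀ k, θ k ≤ θ i := by
    intro k
    rw [hθi]
    by_cases hk2 : k = j
    · subst hk2; rw [hθj]; exact le_trans hμ (le_max_right _ _)
    by_cases hk1 : k = i
    · subst hk1; rw [hθi]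
    · rw [hθk k hk1 hk2]
      exact le_trans (hfeas k) (le_max_left _ _)
  have key := hmin θ hfeas'
  set h : Fin K → ℝ := fun k => N k * (μ k - θbar k) ^ 2 - N k * (μ k - θ k) ^ 2 with hh
  have hsum : ∑ k, h k = h i + h j := by
    exact Finset.sum_eq_add_of_mem _ _ (Finset.mem_univ i) (Finset.mem_univ j) hij
      (fun k _ hk => by simp [hh, hθk k hk.1 hk.2])
  have hsumle : ∑ k, h k ≤ 0 := by
    rw [hh]
    rw [Finset.sum_sub_distrib]
    linarith [key]
  have hhi : 0 ≤ h i := by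
    rw [hh]
    simp only [hθi]
    have : (μ i - m) ^ 2 ≤ (μ i - a) ^ 2 := by
      rcases le_total (μ i) a with hle | hle
      · have : m = a := max_eq_left hle
        rw [this]
      · have : m = μ i := max_eq_right hle
        rw [this]; simp; positivity
    nlinarith [hNi, this]
  have hhj : 0 ≤ h j := by
    rw [hh]
    simp only [hθj]
    simp
    positivity
  rw [hsum] at hsumle
  have hhi0 : h i = 0 := by linarith
  have hhj0 : h j = 0 := by linarith
  constructor
  · by_contra hcon
    push_neg at hcon
    have hma : m = μ i := max_eq_right (le_of_lt hcon)
    rw [hh] at hhi0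
    simp only [hθi, hma] at hhi0
    have : N i * (μ i - a) ^ 2 = 0 := by linarith [hhi0]
    have : (μ i - a) ^ 2 = 0 := by
      rcases mul_eq_zero.mp this with h1 | h1
      · exact absurd h1 (ne_of_gt hNi)
      · exact h1
    have := pow_eq_zero_iff (n := 2) (by norm_num) |>.mp this
    linarith
  · rw [hh] at hhj0
    simp only [hθj] at hhj0
    have : N j * (μ j - θbar j) ^ 2 = 0 := by linarith [hhj0]
    rcases mul_eq_zero.mp this with h1 | h1
    · exact absurd h1 (ne_of_gt hNj)
    · have := pow_eq_zero_iff (n := 2) (by norm_num) |>.mp h1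
      linarith
end
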